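/- For each n ≥ 0, the simplicial category Δ_𝔑ⁿ is cofibrant in sCat: its morphisms are freely generated by the set Indⁿ = ⊔_{m ≥ 0, 0 ≤ a < b ≤ n} Ind(a,b)_m, where Ind(a,b)_m is the set of nondegenerate m-simplices f = (f_x)_{x ∈ (a,b)} of Hom(a,b) = I^{(a,b)} such that f_x is not the constant simplex 0 for every x ∈ (a,b). -/

import Mathlib

open CategoryTheory Simplicial Opposite

/-- A (small) simplicially enriched category, presented level-wise. -/
structure SCat : Type 1 where
  Obj : Type
  Hom : Obj → Obj → SSet.{0}
  id : ∀ (x : Obj) (k : SimplexCategoryᵒᵖ), (Hom x x).obj k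
  comp : ∀ {x y z : Obj} (k : SimplexCategoryᵒᵖ),
    (Hom x y).obj k → (Hom y z).obj k → (Hom x z).obj k
  id_comp : ∀ {x y : Obj} (k) (f : (Hom x y).obj k), comp k (id x k) f = f
  comp_id : ∀ {x y : Obj} (k) (f : (Hom x y).obj k), comp k f (id y k) = f
  assoc : ∀ {w x y z : Obj} (k) (f : (Hom w x).obj k) (g : (Hom x y).obj k)
    (h : (Hom y z).obj k), comp k (comp k f g) h = comp k f (comp k g h)
  id_map : ∀ (x : Obj) {k l : SimplexCategoryᵒᵖ} (φ : k ⟶ l),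
    (Hom x x).map φ (id x k) = id x l
  comp_map : ∀ {x y z : Obj} {k l : SimplexCategoryᵒᵖ} (φ : k ⟶ l)
    (f : (Hom x y).obj k) (g : (Hom y z).obj k),
    (Hom x z).map φ (comp k f g) = comp l ((Hom x y).map φ f) ((Hom y z).map φ g)

/-- A simplicial (i.e. simplicially enriched) functor. -/
structure SFunctor (C D : SCat) : Type where
  obj : C.Obj → D.Obj
  map : ∀ {x y : C.Obj} (k : SimplexCategoryᵒᵖ),
    (C.Hom x y).obj k → (D.Hom (obj x) (obj y)).obj k
  map_id : ∀ (x : C.Obj) (k), map k (C.id x k) = D.id (obj x) k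
  map_comp : ∀ {x y z : C.Obj} (k) (f : (C.Hom x y).obj k) (g : (C.Hom y z).obj k),
    map k (C.comp k f g) = D.comp k (map k f) (map k g)
  map_natural : ∀ {x y : C.Obj} {k l : SimplexCategoryᵒᵖ} (φ : k ⟶ l)
    (f : (C.Hom x y).obj k),
    map l ((C.Hom x y).map φ f) = (D.Hom (obj x) (obj y)).map φ (map k f)

namespace SFunctor

theorem ext' {C D : SCat} {F G : SFunctor C D} (h : F.obj = G.obj)
    (h' : ∀ (x y : C.Obj) (k) (f : (C.Hom x y).obj k),
      HEq (F.map (x := x) (y := y) k f) (G.map (x := x) (y := y) k f)) : F = G := by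
  cases F with
  | mk Fo Fm _ _ _ =>
    cases G with
    | mk Go Gm _ _ _ =>
      obtain rfl : Fo = Go := h
      obtain rfl : @Fm = @Gm := by
        funext x y k f
        exact eq_of_heq (h' x y k f)
      rfl

/-- The identity simplicial functor. -/
def id' (C : SCat) : SFunctor C C where
  obj := _root_.id
  map _ f := f
  map_id _ _ := rfl
  map_comp _ _ _ := rfl
  map_natural _ _ := rfl

/-- Composition of simplicial functors. -/
def comp' {C D E : SCat} (F : SFunctor C D) (G : SFunctor D E) : SFunctor C E where
  obj := G.obj ∘ F.obj
  map k f := G.map k (F.map k f)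
  map_id x k := by show G.map k (F.map k (C.id x k)) = _; rw [F.map_id, G.map_id]; rfl
  map_comp k f g := by show G.map k (F.map k (C.comp k f g)) = _; rw [F.map_comp, G.map_comp]
  map_natural φ f := by
    show G.map _ (F.map _ ((C.Hom _ _).map φ f)) = _
    rw [F.map_natural, G.map_natural]; rfl

end SFunctor

instance : Category.{0, 1} SCat where
  Hom := SFunctor
  id := SFunctor.id'
  comp F G := F.comp' G
  id_comp _ := rfl
  comp_id _ := rfl
  assoc _ _ _ := rfl
section Pi0

/-- Two vertices of a simplicial set related by an edge. -/
def edgeRel (X : SSet.{0}) (a b : X.obj (op ⦋0⦌)) : Prop :=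
  ∃ e : X.obj (op ⦋1⦌), X.map (SimplexCategory.δ 1).op e = a ∧
    X.map (SimplexCategory.δ 0).op e = b

/-- The set of connected components of a simplicial set. -/
def pi0 (X : SSet.{0}) : Type := Quot (edgeRel X)

lemma face_degen (X : SSet.{0}) (a : X.obj (op ⦋0⦌)) (i : Fin 2) :
    X.map (SimplexCategory.δ i).op (X.map (SimplexCategory.σ 0).op a) = a := by
  rw [← FunctorToTypes.map_comp_apply, ← op_comp]
  rw [show SimplexCategory.δ i ≫ SimplexCategory.σ 0 = 𝟙 (⦋0⦌ : SimplexCategory) from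
    SimplexCategory.Hom.ext _ _ (OrderHom.ext _ _ (funext fun x => by
      have : Subsingleton (Fin (⦋0⦌.len + 1)) := by
        rw [SimplexCategory.len_mk]; exact Fin.subsingleton_one
      exact Subsingleton.elim _ _))]
  simp

/-- Functoriality of `pi0`. -/
def pi0Map {X Y : SSet.{0}} (f : X ⟶ Y) : pi0 X → pi0 Y :=
  Quot.map (f.app _) (by
    rintro a b ⟨e, h1, h2⟩
    exact ⟨f.app _ e, by rw [← h1, FunctorToTypes.naturality],
      by rw [← h2, FunctorToTypes.naturality]⟩)

/-- The morphism of simplicial hom-sets induced by a simplicial functor. -/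
def SFunctor.homNat {C D : SCat} (F : SFunctor C D) (x y : C.Obj) :
    C.Hom x y ⟶ D.Hom (F.obj x) (F.obj y) where
  app k := TypeCat.ofHom (F.map k)
  naturality k l φ := by
    ext a
    show F.map l ((C.Hom x y).map φ a) = (D.Hom (F.obj x) (F.obj y)).map φ (F.map k a)
    exact F.map_natural φ a

/-- The underlying type of the category `π₀ C` of a simplicial category `C`. -/
def SCat.Pi0 (C : SCat) : Type := C.Obj

instance SCat.pi0Category (C : SCat) : Category.{0, 0} (SCat.Pi0 C) where
  Hom x y := pi0 (C.Hom x y)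
  id x := Quot.mk _ (C.id x (op ⦋0⦌))
  comp {x y z} f g := Quot.map₂ (C.comp (op ⦋0⦌))
    (by
      rintro a b₁ b₂ ⟨e, h1, h2⟩
      refine ⟨C.comp (op ⦋1⦌) ((C.Hom x y).map (SimplexCategory.σ 0).op a) e, ?_, ?_⟩
      · erw [C.comp_map, face_degen, h1]
      · erw [C.comp_map, face_degen, h2])
    (by
      rintro a₁ a₂ b ⟨e, h1, h2⟩
      refine ⟨C.comp (op ⦋1⦌) e ((C.Hom y z).map (SimplexCategory.σ 0).op b), ?_, ?_⟩
      · erw [C.comp_map, face_degen, h1]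
      · erw [C.comp_map, face_degen, h2]) f g
  id_comp {x y} f := by
    induction f using Quot.ind with
    | _ a => exact congrArg (Quot.mk _) (C.id_comp _ a)
  comp_id {x y} f := by
    induction f using Quot.ind with
    | _ a => exact congrArg (Quot.mk _) (C.comp_id _ a)
  assoc {w x y z} f g h := by
    induction f using Quot.ind with
    | _ a =>
      induction g using Quot.ind with
      | _ b =>
        induction h using Quot.ind with
        | _ c => exact congrArg (Quot.mk _) (C.assoc _ a b c)

/-- The functor `π₀ C ⥤ π₀ D` induced by a simplicial functor. -/
def SFunctor.pi0Functor {C D : SCat} (F : SFunctor C D) : SCat.Pi0 C ⥤ SCat.Pi0 D where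
  obj := F.obj
  map {x y} f := pi0Map (F.homNat x y) f
  map_id x := congrArg (Quot.mk _) (F.map_id x _)
  map_comp {x y z} f g := by
    induction f using Quot.ind with
    | _ a =>
      induction g using Quot.ind with
      | _ b => exact congrArg (Quot.mk _) (F.map_comp _ a b)

end Pi0
section Homotopy
open CategoryTheory.Limits

/-- The constant map from `X` to `Δ[1]` at vertex `i`. -/
def constTo1 (X : SSet.{0}) (i : Fin 2) : X ⟶ Δ[1] where
  app k := TypeCat.ofHom (fun _ => SSet.stdSimplex.const 1 i k)
  naturality k l φ := by ext a; rfl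

lemma constTo1_natural {X Y : SSet.{0}} (f : X ⟶ Y) (i : Fin 2) :
    f ≫ constTo1 Y i = constTo1 X i := by
  apply NatTrans.ext; funext k; ext a; rfl

/-- The inclusion of `X` into the cylinder `X ⨯ Δ[1]` at vertex `i`. -/
noncomputable def cylIns (X : SSet.{0}) (i : Fin 2) : X ⟶ X ⨯ Δ[1] :=
  prod.lift (𝟙 X) (constTo1 X i)

/-- Elementary simplicial homotopy relation between two maps of simplicial sets. -/
def SHomotopy {X Y : SSet.{0}} (f g : X ⟶ Y) : Prop :=
  ∃ H : X ⨯ Δ[1] ⟶ Y, cylIns X 0 ≫ H = f ∧ cylIns X 1 ≫ H = g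

/-- The homotopy relation: equivalence relation generated by elementary homotopies. -/
def SHomotopic {X Y : SSet.{0}} (f g : X ⟶ Y) : Prop :=
  Relation.EqvGen SHomotopy f g

/-- Simplicial homotopy equivalences of simplicial sets. -/
def IsHomotopyEquiv {X Y : SSet.{0}} (f : X ⟶ Y) : Prop :=
  ∃ g : Y ⟶ X, SHomotopic (f ≫ g) (𝟙 X) ∧ SHomotopic (g ≫ f) (𝟙 Y)

/-- Homotopy classes of maps of simplicial sets. -/
def htpyClasses (X K : SSet.{0}) : Type :=
  Quot (SHomotopy (X := X) (Y := K))

lemma cylIns_naturality {X Y : SSet.{0}} (f : X ⟶ Y) (i : Fin 2) :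
    cylIns X i ≫ prod.map f (𝟙 Δ[1]) = f ≫ cylIns Y i := by
  simp [cylIns, prod.comp_lift, constTo1_natural]

/-- Precomposition on homotopy classes. -/
noncomputable def htpyPrecomp {X Y : SSet.{0}} (f : X ⟶ Y) (K : SSet.{0}) :
    htpyClasses Y K → htpyClasses X K :=
  Quot.map (fun g => f ≫ g) (by
    rintro a b ⟨H, h0, h1⟩
    refine ⟨prod.map f (𝟙 _) ≫ H, ?_, ?_⟩
    · rw [← Category.assoc, cylIns_naturality, Category.assoc, h0]
    · rw [← Category.assoc, cylIns_naturality, Category.assoc, h1])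

/-- Kan complexes, with the definition of the older Mathlib (horn filling for all horns
`Λ[n, i]`, including `n = 0`). -/
class SSet.OldKanComplex (S : SSet.{0}) : Prop where
  hornFilling : ∀ ⦃n : ℕ⦄ ⦃i : Fin (n + 1)⦄ (σ₀ : (Λ[n, i] : SSet.{0}) ⟶ S),
    ∃ σ : Δ[n] ⟶ S, σ₀ = (SSet.horn n i).ι ≫ σ

/-- A map of simplicial sets is a weak homotopy equivalence iff it induces a bijection on
homotopy classes of maps into an arbitrary Kan complex. -/
def IsWeakHomotopyEquiv {X Y : SSet.{0}} (f : X ⟶ Y) : Prop :=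
  ∀ K : SSet.{0}, SSet.OldKanComplex K → Function.Bijective (htpyPrecomp f K)

/-- Kan fibrations: right lifting property with respect to all horn inclusions. -/
def IsKanFibration {X Y : SSet.{0}} (p : X ⟶ Y) : Prop :=
  ∀ (n : ℕ) (i : Fin (n + 1)), HasLiftingProperty (SSet.horn n i).ι p

/-- The map of nerves induced by a functor. -/
def nerveMap {A B : Type} [Category.{0} A] [Category.{0} B] (G : A ⥤ B) :
    nerve A ⟶ nerve B :=
  nerveFunctor.map (X := Cat.of A) (Y := Cat.of B) G.toCatHom

end Homotopy

section Equivalences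

/-- Weak equivalences of simplicial categories. -/
def SFunctor.IsWeakEquiv {C D : SCat} (F : SFunctor C D) : Prop :=
  IsHomotopyEquiv (_root_.nerveMap F.pi0Functor) ∧
    ∀ x y : C.Obj, IsWeakHomotopyEquiv (F.homNat x y)

/-- Strong equivalences of simplicial categories. -/
def SFunctor.IsStrongEquiv {C D : SCat} (F : SFunctor C D) : Prop :=
  F.IsWeakEquiv ∧ F.pi0Functor.IsEquivalence

/-- Fibrant simplicial categories: all hom-simplicial sets are Kan complexes. -/
def SCat.Fibrant (C : SCat) : Prop := ∀ x y : C.Obj, SSet.OldKanComplex (C.Hom x y)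

/-- Weak groupoids: `π₀ C` is a groupoid. -/
def SCat.IsWeakGroupoid (C : SCat) : Prop :=
  ∀ (x y : C.Pi0) (f : x ⟶ y), IsIso f

/-- Fibrant groupoids. -/
def SCat.IsFibrantGroupoid (C : SCat) : Prop := C.Fibrant ∧ C.IsWeakGroupoid

/-- `0`-arrows of a simplicial category. -/
def SCat.hom₀ (C : SCat) (x y : C.Obj) : Type := (C.Hom x y).obj (op ⦋0⦌)

/-- A `0`-arrow is a homotopy equivalence if its class in `π₀ C` is an isomorphism. -/
def SCat.IsHtpyEquivArrow (C : SCat) {x y : C.Obj} (α : C.hom₀ x y) : Prop :=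
  IsIso (C := C.Pi0) (X := x) (Y := y) (Quot.mk _ α)

end Equivalences

section Cofibrations

/-- Right lifting property with respect to a class of maps. -/
def rlpOf {𝒞 : Type*} [Category 𝒞] (S : MorphismProperty 𝒞) : MorphismProperty 𝒞 :=
  fun _ _ p => ∀ {A B : 𝒞} (i : A ⟶ B), S i → HasLiftingProperty i p

/-- Left lifting property with respect to a class of maps. -/
def llpOf {𝒞 : Type*} [Category 𝒞] (T : MorphismProperty 𝒞) : MorphismProperty 𝒞 :=
  fun _ _ i => ∀ {X Y : 𝒞} (p : X ⟶ Y), T p → HasLiftingProperty i p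

/-- The constant simplicial set. -/
def constSSet (A : Type) : SSet.{0} := (Functor.const _).obj A

/-- The empty simplicial category. -/
def emptySCat : SCat where
  Obj := Empty
  Hom x _ := x.elim
  id x := x.elim
  comp {x} := x.elim
  id_comp {x} := x.elim
  comp_id {x} := x.elim
  assoc {x} := x.elim
  id_map x := x.elim
  comp_map {x} := x.elim

/-- The one-point simplicial category. -/
def ptSCat : SCat where
  Obj := PUnit
  Hom _ _ := constSSet PUnit
  id _ _ := PUnit.unit
  comp _ _ _ := PUnit.unit
  id_comp _ _ := rfl
  comp_id _ _ := rfl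
  assoc _ _ _ _ := rfl
  id_map := fun _ {_ _} _ => rfl
  comp_map := fun {_ _ _} {_ _} _ _ _ => rfl

/-- The unique simplicial functor from the empty simplicial category to the point. -/
def emptyToPt : emptySCat ⟶ ptSCat where
  obj x := x.elim
  map {x} := x.elim
  map_id x := x.elim
  map_comp {x} := x.elim
  map_natural {x} := x.elim

/-- Hom simplicial sets of the simplicial category `K₀₁`. -/
def K01Hom (K : SSet.{0}) : Bool → Bool → SSet.{0} := fun x y =>
  match x, y with
  | false, false => constSSet PUnit
  | false, true  => K
  | true,  false => constSSet Empty
  | true,  true  => constSSet PUnit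

/-- The simplicial category with two objects `0`, `1` and `Hom(0,1) = K`. -/
def K01 (K : SSet.{0}) : SCat where
  Obj := Bool
  Hom := K01Hom K
  id x k :=
    match x with
    | false => PUnit.unit
    | true => PUnit.unit
  comp {x y z} k f g :=
    match x, y, z, f, g with
    | false, false, false, _, _ => PUnit.unit
    | false, false, true,  _, g => g
    | false, true,  true,  f, _ => f
    | true,  true,  true,  _, _ => PUnit.unit
    | false, true,  false, _, g => Empty.elim g
    | true,  false, _,     f, _ => Empty.elim f
    | true,  true,  false, _, g => Empty.elim g
  id_comp {x y} k f := by
    cases x <;> cases y <;> first | rfl | exact Empty.elim f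
  comp_id {x y} k f := by
    cases x <;> cases y <;> first | rfl | exact Empty.elim f
  assoc {w x y z} k f g h := by
    cases w <;> cases x <;> cases y <;> cases z <;>
      first | rfl | (exact Empty.elim f) | (exact Empty.elim g) | exact Empty.elim h
  id_map := fun x {_ _} _ => by cases x <;> rfl
  comp_map {x y z} k l φ f g := by
    cases x <;> cases y <;> cases z <;>
      first | rfl | (exact Empty.elim f) | exact Empty.elim g

/-- The simplicial functor `K₀₁ → L₀₁` induced by a map `K ⟶ L`. -/
def K01map {K L : SSet.{0}} (i : K ⟶ L) : K01 K ⟶ K01 L where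
  obj := _root_.id
  map {x y} k f :=
    match x, y, f with
    | false, false, f => f
    | false, true,  f => i.app k f
    | true,  true,  f => f
    | true,  false, f => Empty.elim f
  map_id x k := by cases x <;> rfl
  map_comp {x y z} k f g := by
    cases x <;> cases y <;> cases z <;>
      first | rfl | (exact Empty.elim f) | exact Empty.elim g
  map_natural {x y} k l φ f := by
    cases x <;> cases y <;>
      first
        | rfl
        | (exact NatTrans.naturality_apply i φ (show K.obj k from f))
        | exact Empty.elim f

/-- The generating cofibrations of `SCat`. -/
def genCof : CategoryTheory.MorphismProperty SCat := fun _ _ u =>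
  Nonempty (CategoryTheory.Arrow.mk u ≅ CategoryTheory.Arrow.mk emptyToPt) ∨
    ∃ (K L : SSet.{0}) (i : K ⟶ L), CategoryTheory.Mono i ∧
      Nonempty (CategoryTheory.Arrow.mk u ≅ CategoryTheory.Arrow.mk (K01map i))

/-- The cofibrations of `SCat`: the weakly saturated class generated by
the generating cofibrations, i.e. `llp (rlp (generators))`. -/
def Cofib : CategoryTheory.MorphismProperty SCat := llpOf (rlpOf genCof)

/-- The class of weak equivalences, as a morphism property. -/
def WeakEq : CategoryTheory.MorphismProperty SCat := fun _ _ f => f.IsWeakEquiv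

/-- The class of strong equivalences, as a morphism property. -/
def StrongEq : CategoryTheory.MorphismProperty SCat := fun _ _ f => f.IsStrongEquiv

end Cofibrations

section Model

/-- `f` is a retract of `g` in the arrow category. -/
def IsRetractOf {𝒞 : Type*} [Category 𝒞] {A B X Y : 𝒞} (f : A ⟶ B) (g : X ⟶ Y) : Prop :=
  ∃ (s : CategoryTheory.Arrow.mk f ⟶ CategoryTheory.Arrow.mk g)
    (r : CategoryTheory.Arrow.mk g ⟶ CategoryTheory.Arrow.mk f), s ≫ r = 𝟙 _

/-- A model structure on a category, with prescribed classes of weak equivalences,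
cofibrations and fibrations. -/
structure ModelStructure (𝒞 : Type*) [Category 𝒞]
    (W Cof Fib : CategoryTheory.MorphismProperty 𝒞) : Prop where
  weq_comp : ∀ {X Y Z : 𝒞} (f : X ⟶ Y) (g : Y ⟶ Z), W f → W g → W (f ≫ g)
  weq_of_postcomp : ∀ {X Y Z : 𝒞} (f : X ⟶ Y) (g : Y ⟶ Z), W g → W (f ≫ g) → W f
  weq_of_precomp : ∀ {X Y Z : 𝒞} (f : X ⟶ Y) (g : Y ⟶ Z), W f → W (f ≫ g) → W g
  weq_retract : ∀ {A B X Y : 𝒞} (f : A ⟶ B) (g : X ⟶ Y), IsRetractOf f g → W g → W f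
  cof_retract : ∀ {A B X Y : 𝒞} (f : A ⟶ B) (g : X ⟶ Y), IsRetractOf f g → Cof g → Cof f
  fib_retract : ∀ {A B X Y : 𝒞} (f : A ⟶ B) (g : X ⟶ Y), IsRetractOf f g → Fib g → Fib f
  lift_triv_cof : ∀ {A B X Y : 𝒞} (i : A ⟶ B) (p : X ⟶ Y),
    Cof i → W i → Fib p → HasLiftingProperty i p
  lift_triv_fib : ∀ {A B X Y : 𝒞} (i : A ⟶ B) (p : X ⟶ Y),
    Cof i → Fib p → W p → HasLiftingProperty i p
  fact_triv_cof : ∀ {X Y : 𝒞} (f : X ⟶ Y), ∃ (Z : 𝒞) (i : X ⟶ Z) (p : Z ⟶ Y),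
    Cof i ∧ W i ∧ Fib p ∧ i ≫ p = f
  fact_triv_fib : ∀ {X Y : 𝒞} (f : X ⟶ Y), ∃ (Z : 𝒞) (i : X ⟶ Z) (p : Z ⟶ Y),
    Cof i ∧ Fib p ∧ W p ∧ i ≫ p = f

end Model
section DeltaN

/-- The "gap" `(a,b) = {c | a < c < b}`. -/
def gapSet (n : ℕ) (a b : Fin (n + 1)) : Type :=
  {c : Fin (n + 1) // a < c ∧ c < b}

instance (n : ℕ) (a b : Fin (n + 1)) : Fintype (gapSet n a b) := by
  unfold gapSet; infer_instance

/-- The constant `0` simplex of `Δ¹`. -/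
def cst0 (k : SimplexCategoryᵒᵖ) : k.unop ⟶ (⦋1⦌ : SimplexCategory) :=
  SimplexCategory.const k.unop ⦋1⦌ 0

/-- The Hom simplicial set `I^{(a,b)}` of `Δ_𝔑ⁿ` (empty if `a > b`). -/
def DHom (n : ℕ) (a b : Fin (n + 1)) : SSet.{0} where
  obj k := PLift (a ≤ b) × (gapSet n a b → (k.unop ⟶ (⦋1⦌ : SimplexCategory)))
  map φ := TypeCat.ofHom (fun f => ⟨f.1, fun c => φ.unop ≫ f.2 c⟩)
  map_id k := by
    ext f : 3; refine Prod.ext rfl ?_; funext c; simp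
  map_comp φ ψ := by
    ext f : 3; refine Prod.ext rfl ?_; funext c; simp

/-- Composition of arrows in `Δ_𝔑ⁿ`: insert the constant value `0` at the coordinate `b`. -/
def DCompFun {n : ℕ} {a b c : Fin (n + 1)} (k : SimplexCategoryᵒᵖ)
    (f2 : gapSet n a b → (k.unop ⟶ (⦋1⦌ : SimplexCategory)))
    (g2 : gapSet n b c → (k.unop ⟶ (⦋1⦌ : SimplexCategory))) :
    gapSet n a c → (k.unop ⟶ (⦋1⦌ : SimplexCategory)) := fun x =>
  if h1 : x.1 < b then f2 ⟨x.1, x.2.1, h1⟩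
  else if h2 : b < x.1 then g2 ⟨x.1, h2, x.2.2⟩
  else cst0 k

/-- The simplicial category `Δ_𝔑ⁿ`. -/
def DCat (n : ℕ) : SCat where
  Obj := Fin (n + 1)
  Hom := DHom n
  id a k := ⟨⟨le_refl a⟩, fun c => absurd (lt_trans c.2.1 c.2.2) (lt_irrefl a)⟩
  comp {a b c} k f g := ⟨⟨f.1.down.trans g.1.down⟩, DCompFun k f.2 g.2⟩
  id_comp {a b} k f := by
    refine Prod.ext (Subsingleton.elim _ _) ?_
    funext c
    dsimp only
    unfold DCompFun
    rw [dif_neg (asymm c.2.1), dif_pos c.2.1]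
    exact congrArg f.2 (Subtype.ext rfl)
  comp_id {a b} k f := by
    refine Prod.ext (Subsingleton.elim _ _) ?_
    funext c
    dsimp only
    unfold DCompFun
    rw [dif_pos c.2.2]
    exact congrArg f.2 (Subtype.ext rfl)
  assoc {w x y z} k f g h := by
    refine Prod.ext (Subsingleton.elim _ _) ?_
    funext d
    have hxy := g.1.down
    dsimp only
    unfold DCompFun
    split_ifs <;>
      first
        | rfl
        | (exfalso; simp only [Fin.lt_def, Fin.le_def] at *; omega)
  id_map := fun a {_ _} φ => by
    refine Prod.ext rfl ?_
    funext c
    exact absurd (lt_trans c.2.1 c.2.2) (lt_irrefl a)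
  comp_map := fun {a b c} {k l} φ f g => by
    refine Prod.ext rfl ?_
    funext x
    show φ.unop ≫ DCompFun k f.2 g.2 x = DCompFun l _ _ x
    unfold DCompFun
    split_ifs <;> rfl
instance (n : ℕ) (a b : (DCat n).Obj) : Fintype (gapSet n a b) :=
  (inferInstance : Fintype (gapSet n (show Fin (n + 1) from a) (show Fin (n + 1) from b)))
end DeltaN
section DMapSec

/-- The map of cubes induced by a monotone map, on the level of hom-simplicial sets. -/
def DMapHomFun {m n : SimplexCategory} (F : Fin (m.len + 1) →o Fin (n.len + 1))
    {a b : Fin (m.len + 1)} (k : SimplexCategoryᵒᵖ)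
    (v : gapSet m.len a b → (k.unop ⟶ (⦋1⦌ : SimplexCategory)))
    (c : gapSet n.len (F a) (F b)) : k.unop ⟶ (⦋1⦌ : SimplexCategory) :=
  SimplexCategory.Hom.mk
    ⟨fun j => if ∀ x : gapSet m.len a b, F x.1 = c.1 → (v x).toOrderHom j = 1 then 1 else 0,
     by
      intro j j' hj
      dsimp only
      by_cases h1 : ∀ x : gapSet m.len a b, F x.1 = c.1 → (v x).toOrderHom j = 1
      · rw [if_pos h1, if_pos]
        intro x hx
        have h3 := (v x).toOrderHom.monotone hj
        have h4 := h1 x hx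
        have h5 := ((v x).toOrderHom j').isLt
        rw [Fin.ext_iff] at h4 ⊢
        rw [Fin.le_def] at h3
        simp only [Fin.val_one, SimplexCategory.len_mk] at *
        omega
      · rw [if_neg h1]
        exact Fin.zero_le _⟩


lemma DCompFun_lt {n : ℕ} {a b c : Fin (n + 1)} (k : SimplexCategoryᵒᵖ)
    (f2 : gapSet n a b → (k.unop ⟶ (⦋1⦌ : SimplexCategory)))
    (g2 : gapSet n b c → (k.unop ⟶ (⦋1⦌ : SimplexCategory)))
    (x : gapSet n a c) (h : x.1 < b) :
    DCompFun k f2 g2 x = f2 ⟨x.1, x.2.1, h⟩ := by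
  unfold DCompFun; rw [dif_pos h]

lemma DCompFun_gt {n : ℕ} {a b c : Fin (n + 1)} (k : SimplexCategoryᵒᵖ)
    (f2 : gapSet n a b → (k.unop ⟶ (⦋1⦌ : SimplexCategory)))
    (g2 : gapSet n b c → (k.unop ⟶ (⦋1⦌ : SimplexCategory)))
    (x : gapSet n a c) (h : b < x.1) :
    DCompFun k f2 g2 x = g2 ⟨x.1, h, x.2.2⟩ := by
  unfold DCompFun; rw [dif_neg (asymm h), dif_pos h]

lemma DCompFun_mid {n : ℕ} {a b c : Fin (n + 1)} (k : SimplexCategoryᵒᵖ)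
    (f2 : gapSet n a b → (k.unop ⟶ (⦋1⦌ : SimplexCategory)))
    (g2 : gapSet n b c → (k.unop ⟶ (⦋1⦌ : SimplexCategory)))
    (x : gapSet n a c) (h : x.1 = b) :
    DCompFun k f2 g2 x = cst0 k := by
  unfold DCompFun
  rw [dif_neg (by rw [h]; exact lt_irrefl _), dif_neg (by rw [h]; exact lt_irrefl _)]

/-- The simplicial functor `Δ_𝔑(f) : Δ_𝔑ᵐ → Δ_𝔑ⁿ` induced by `f : [m] → [n]`. -/
def DMap {m n : SimplexCategory} (f : m ⟶ n) : SFunctor (DCat m.len) (DCat n.len) where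
  obj := f.toOrderHom
  map {a b} k v := ⟨⟨f.toOrderHom.monotone v.1.down⟩, DMapHomFun f.toOrderHom k v.2⟩
  map_id a k := by
    refine Prod.ext (Subsingleton.elim _ _) ?_
    funext c
    exact absurd (lt_trans c.2.1 c.2.2) (lt_irrefl _)
  map_comp {a b c} k u v := by
    refine Prod.ext (Subsingleton.elim _ _) ?_
    funext x
    have hab := u.1.down
    have hbc := v.1.down
    dsimp only
    show DMapHomFun f.toOrderHom k (DCompFun k u.2 v.2) x =
      DCompFun k (DMapHomFun f.toOrderHom k u.2) (DMapHomFun f.toOrderHom k v.2) x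
    rcases lt_trichotomy x.1 (f.toOrderHom b) with hx | hx | hx
    · rw [DCompFun_lt _ _ _ _ hx]
      apply SimplexCategory.Hom.ext _ _
      apply OrderHom.ext
      funext j
      refine if_congr ⟨?_, ?_⟩ rfl rfl
      · intro hc s hs
        have hsc : s.1 < c := lt_of_lt_of_le s.2.2 hbc
        have h0 := hc ⟨s.1, s.2.1, hsc⟩ hs
        rw [DCompFun_lt k u.2 v.2 ⟨s.1, s.2.1, hsc⟩ s.2.2] at h0
        convert h0 using 3 <;> rfl
      · intro hc t ht
        have htb : t.1 < b := by
          by_contra hno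
          have h1 : f.toOrderHom b ≤ f.toOrderHom t.1 := f.toOrderHom.monotone (not_lt.mp hno)
          rw [ht] at h1
          exact absurd hx (not_lt.mpr h1)
        rw [DCompFun_lt _ _ _ _ htb]
        exact hc ⟨t.1, t.2.1, htb⟩ ht
    · have hafb : f.toOrderHom a < f.toOrderHom b := by rw [← hx]; exact x.2.1
      have hfbc : f.toOrderHom b < f.toOrderHom c := by rw [← hx]; exact x.2.2
      have hab' : @LT.lt (Fin (m.len + 1)) _ a b := by
        rcases lt_or_eq_of_le hab with h | h
        · exact h
        · rw [h] at hafb; exact absurd hafb (lt_irrefl _)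
      have hbc' : @LT.lt (Fin (m.len + 1)) _ b c := by
        rcases lt_or_eq_of_le hbc with h | h
        · exact h
        · rw [h] at hfbc; exact absurd hfbc (lt_irrefl _)
      rw [DCompFun_mid _ _ _ _ hx]
      apply SimplexCategory.Hom.ext _ _
      apply OrderHom.ext
      funext j
      have hnot : ¬ ∀ t : gapSet m.len a c, f.toOrderHom t.1 = x.1 →
          (SimplexCategory.Hom.toOrderHom (DCompFun k u.2 v.2 t)) j = 1 := by
        intro hcond
        have h0 := hcond ⟨b, hab', hbc'⟩ hx.symm
        rw [DCompFun_mid k u.2 v.2 ⟨b, hab', hbc'⟩ rfl] at h0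
        have h1 : (SimplexCategory.Hom.toOrderHom (cst0 k)) j = 0 := rfl
        rw [h1] at h0
        have h2 := congrArg Fin.val h0
        simp [SimplexCategory.len_mk] at h2
      show (if ∀ t : gapSet m.len a c, f.toOrderHom t.1 = x.1 →
          (SimplexCategory.Hom.toOrderHom (DCompFun k u.2 v.2 t)) j = 1
        then (1 : Fin (⦋1⦌.len + 1)) else 0) = (SimplexCategory.Hom.toOrderHom (cst0 k)) j
      rw [if_neg hnot]
      rfl
    · rw [DCompFun_gt _ _ _ _ hx]
      apply SimplexCategory.Hom.ext _ _
      apply OrderHom.ext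
      funext j
      refine if_congr ⟨?_, ?_⟩ rfl rfl
      · intro hc s hs
        have hsa : @LT.lt (Fin (m.len + 1)) _ a s.1 := lt_of_le_of_lt hab s.2.1
        have h0 := hc ⟨s.1, hsa, s.2.2⟩ hs
        rw [DCompFun_gt k u.2 v.2 ⟨s.1, hsa, s.2.2⟩ s.2.1] at h0
        convert h0 using 3 <;> rfl
      · intro hc t ht
        have htb : @LT.lt (Fin (m.len + 1)) _ b t.1 := by
          by_contra hno
          have h1 : f.toOrderHom t.1 ≤ f.toOrderHom b := f.toOrderHom.monotone (not_lt.mp hno)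
          rw [ht] at h1
          exact absurd hx (not_lt.mpr h1)
        rw [DCompFun_gt _ _ _ _ htb]
        exact hc ⟨t.1, htb, t.2.2⟩ ht
  map_natural {a b} k l φ v := by
    refine Prod.ext rfl ?_
    funext c
    rfl

end DMapSec
section Cosimplicial

lemma fin2_ite_eq_one {P : Prop} [Decidable P] :
    ((if P then (1 : Fin ((⦋1⦌ : SimplexCategory).len + 1)) else 0) = 1) ↔ P := by
  split_ifs with h
  · exact ⟨fun _ => h, fun _ => rfl⟩
  · refine ⟨fun h0 => ?_, fun hp => absurd hp h⟩
    have h2 := congrArg Fin.val h0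
    simp [SimplexCategory.len_mk] at h2

lemma DMap_id (m : SimplexCategory) : DMap (𝟙 m) = SFunctor.id' (DCat m.len) := by
  apply SFunctor.ext'
  · rfl
  · intro x y k v
    apply heq_of_eq
    refine Prod.ext (Subsingleton.elim _ _) ?_
    funext c
    apply SimplexCategory.Hom.ext _ _
    apply OrderHom.ext
    funext j
    show (if ∀ t : gapSet m.len x y, (𝟙 m : m ⟶ m).toOrderHom t.1 = c.1 →
        (SimplexCategory.Hom.toOrderHom (v.2 t)) j = 1
      then (1 : Fin ((⦋1⦌ : SimplexCategory).len + 1)) else 0)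
      = (SimplexCategory.Hom.toOrderHom (v.2 c)) j
    by_cases hv : (SimplexCategory.Hom.toOrderHom (v.2 c)) j = 1
    · rw [if_pos, hv]
      intro t ht
      have htc : t = c := Subtype.ext ht
      rw [htc]; exact hv
    · rw [if_neg]
      · have h2 := ((SimplexCategory.Hom.toOrderHom (v.2 c)) j).isLt
        rw [Fin.ext_iff] at hv ⊢
        simp only [SimplexCategory.len_mk, Fin.val_one, Fin.val_zero] at *
        omega
      · intro hcond; exact hv (hcond c rfl)

lemma DMap_comp {l m n : SimplexCategory} (f : l ⟶ m) (g : m ⟶ n) :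
    DMap (f ≫ g) = (DMap f).comp' (DMap g) := by
  apply SFunctor.ext'
  · rfl
  · intro a b k v
    apply heq_of_eq
    refine Prod.ext (Subsingleton.elim _ _) ?_
    funext c
    apply SimplexCategory.Hom.ext _ _
    apply OrderHom.ext
    funext j
    show (if ∀ t : gapSet l.len a b, (f ≫ g).toOrderHom t.1 = c.1 →
        (SimplexCategory.Hom.toOrderHom (v.2 t)) j = 1
      then (1 : Fin ((⦋1⦌ : SimplexCategory).len + 1)) else 0)
      = (if ∀ s : gapSet m.len (f.toOrderHom a) (f.toOrderHom b),
            g.toOrderHom s.1 = c.1 →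
            (SimplexCategory.Hom.toOrderHom (DMapHomFun f.toOrderHom k v.2 s)) j = 1
         then (1 : Fin ((⦋1⦌ : SimplexCategory).len + 1)) else 0)
    refine if_congr ⟨?_, ?_⟩ rfl rfl
    · intro hP s hs
      rw [show (SimplexCategory.Hom.toOrderHom (DMapHomFun f.toOrderHom k v.2 s)) j
          = (if ∀ t : gapSet l.len a b, f.toOrderHom t.1 = s.1 →
              (SimplexCategory.Hom.toOrderHom (v.2 t)) j = 1
             then (1 : Fin ((⦋1⦌ : SimplexCategory).len + 1)) else 0) from rfl,
        fin2_ite_eq_one]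
      intro t ht
      refine hP t ?_
      show g.toOrderHom (f.toOrderHom t.1) = c.1
      rw [ht, hs]
    · intro hQ t ht
      have ht' : g.toOrderHom (f.toOrderHom t.1) = c.1 := ht
      have hfa : f.toOrderHom a < f.toOrderHom t.1 := by
        rcases lt_or_eq_of_le (f.toOrderHom.monotone (le_of_lt t.2.1)) with h | h
        · exact h
        · exfalso
          have hc1 : g.toOrderHom (f.toOrderHom t.1) < c.1 := by
            rw [← h]; exact c.2.1
          rw [ht'] at hc1
          exact lt_irrefl _ hc1
      have hfb : f.toOrderHom t.1 < f.toOrderHom b := by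
        rcases lt_or_eq_of_le (f.toOrderHom.monotone (le_of_lt t.2.2)) with h | h
        · exact h
        · exfalso
          have hc1 : c.1 < g.toOrderHom (f.toOrderHom t.1) := by
            rw [h]; exact c.2.2
          rw [ht'] at hc1
          exact lt_irrefl _ hc1
      have h0 := hQ ⟨f.toOrderHom t.1, hfa, hfb⟩ ht'
      rw [show (SimplexCategory.Hom.toOrderHom
          (DMapHomFun f.toOrderHom k v.2 ⟨f.toOrderHom t.1, hfa, hfb⟩)) j
          = (if ∀ t' : gapSet l.len a b, f.toOrderHom t'.1 = f.toOrderHom t.1 →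
              (SimplexCategory.Hom.toOrderHom (v.2 t')) j = 1
             then (1 : Fin ((⦋1⦌ : SimplexCategory).len + 1)) else 0) from rfl,
        fin2_ite_eq_one] at h0
      exact h0 t rfl

/-- The cosimplicial object `n ↦ Δ_𝔑ⁿ` in `SCat`. -/
def DCatS : CategoryTheory.CosimplicialObject SCat where
  obj m := DCat m.len
  map f := DMap f
  map_id m := DMap_id m
  map_comp f g := DMap_comp f g

/-- The homotopy coherent nerve of a simplicial category. -/
def hcNerveObj (C : SCat) : SSet.{0} where
  obj k := SFunctor (DCat k.unop.len) C
  map φ := TypeCat.ofHom (fun F => (DMap φ.unop).comp' F)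
  map_id k := by
    ext F
    show (DMap (𝟙 k.unop)).comp' F = F
    rw [DMap_id]
    rfl
  map_comp {k l p} φ ψ := by
    ext F
    show (DMap (ψ.unop ≫ φ.unop)).comp' F = (DMap ψ.unop).comp' ((DMap φ.unop).comp' F)
    rw [DMap_comp]
    rfl

/-- The homotopy coherent nerve functor `𝔑 : sCat → sSet`. -/
def hcNerve : SCat ⥤ SSet.{0} where
  obj := hcNerveObj
  map {C D} F :=
    { app := fun k => TypeCat.ofHom (fun G => G.comp' F)
      naturality := fun k l φ => rfl }
  map_id C := by
    apply NatTrans.ext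
    funext k
    ext G
    show G.comp' (SFunctor.id' C) = G
    rfl
  map_comp F G := by
    apply NatTrans.ext
    funext k
    ext H
    rfl

end Cosimplicial

/-- The unique simplicial functor from the empty simplicial category. -/
def emptyTo (C : SCat) : emptySCat ⟶ C where
  obj x := x.elim
  map {x} := x.elim
  map_id x := x.elim
  map_comp {x} := x.elim
  map_natural {x} := x.elim

/-- A simplicial category is cofibrant if the map from the empty simplicial category to it
is a cofibration. -/
def SCat.Cofibrant (C : SCat) : Prop := Cofib (emptyTo C)

/-- A decomposition of an arrow of `Δ_𝔑ⁿ` into indecomposable factors: a strictly monotone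
chain from `a` to `b` whose interior points are exactly the coordinates where `v` takes
the constant value `0` (so that the induced factors lie in `Ind`, i.e. have no coordinate
equal to the constant `0`-simplex). -/
structure Decomp (n : ℕ) (a b : Fin (n + 1)) (k : SimplexCategoryᵒᵖ)
    (v : (DHom n a b).obj k) : Type where
  r : ℕ
  c : Fin (r + 1) → Fin (n + 1)
  mono : StrictMono c
  first : c 0 = a
  last : c (Fin.last r) = b
  cut : ∀ (j : Fin (r + 1)), j ≠ 0 → j ≠ Fin.last r →
    ∀ (h : a < c j ∧ c j < b), v.2 ⟨c j, h⟩ = cst0 k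
  noncut : ∀ x : gapSet n a b, (∀ j : Fin (r + 1), c j ≠ x.1) → v.2 x ≠ cst0 k

/-!
An arrow `v : a → b` of `Δ_𝔑ⁿ` factors through `m` (with `a < m < b`) exactly when its
coordinate at `m` is the constant simplex `0`, and then it is the composite of its restrictions
to `(a, m)` and `(m, b)`. Hence the factorisation of `v` into indecomposables is forced: its cut
points are `a`, `b` and the coordinates where `v` is `0`.

For cofibrancy, let `p` have the right lifting property against the generating cofibrations and
`G : Δ_𝔑ⁿ → Y`. Objects lift by lifting against `∅ → *`. Hom-complexes are lifted by induction on
the length `b - a`: on the decomposable arrows of `Hom(a, b)` the lift is forced to be the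
composite of lifts of shorter arrows, which is independent of the cut point by associativity,
and it extends to all of `Hom(a, b)` by lifting against `(∂Hom(a, b))₀₁ → Hom(a, b)₀₁`.
-/

section Decompositions

variable {n : ℕ} {a b : Fin (n + 1)} {k : SimplexCategoryᵒᵖ}

open Classical in
noncomputable def cutPoints (v : (DHom n a b).obj k) : Finset (Fin (n + 1)) :=
  Finset.univ.filter fun c => c = a ∨ c = b ∨ ∃ h : a < c ∧ c < b, v.2 ⟨c, h⟩ = cst0 k

variable {v : (DHom n a b).obj k}

lemma mem_cutPoints {c : Fin (n + 1)} :
    c ∈ cutPoints v ↔ c = a ∨ c = b ∨ ∃ h : a < c ∧ c < b, v.2 ⟨c, h⟩ = cst0 k := by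
  simp [cutPoints]

lemma left_mem_cutPoints : a ∈ cutPoints v := mem_cutPoints.2 (Or.inl rfl)

lemma right_mem_cutPoints : b ∈ cutPoints v := mem_cutPoints.2 (Or.inr (Or.inl rfl))

lemma mem_Icc_of_mem_cutPoints {c : Fin (n + 1)} (hc : c ∈ cutPoints v) : a ≤ c ∧ c ≤ b := by
  rcases mem_cutPoints.1 hc with rfl | rfl | ⟨h, -⟩
  exacts [⟨le_rfl, v.1.down⟩, ⟨v.1.down, le_rfl⟩, ⟨h.1.le, h.2.le⟩]

namespace Decomp

lemma image_c (d : Decomp n a b k v) : Finset.univ.image d.c = cutPoints v := by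
  ext c
  simp only [Finset.mem_image, Finset.mem_univ, true_and]
  constructor
  · rintro ⟨j, rfl⟩
    by_cases h0 : j = 0
    · rw [h0, d.first]; exact left_mem_cutPoints
    by_cases hl : j = Fin.last d.r
    · rw [hl, d.last]; exact right_mem_cutPoints
    have h : a < d.c j ∧ d.c j < b :=
      ⟨lt_of_eq_of_lt d.first.symm (d.mono (Fin.pos_of_ne_zero h0)),
        lt_of_lt_of_eq (d.mono (Fin.lt_last_iff_ne_last.2 hl)) d.last⟩
    exact mem_cutPoints.2 (Or.inr (Or.inr ⟨h, d.cut j h0 hl h⟩))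
  · intro hc
    rcases mem_cutPoints.1 hc with rfl | rfl | ⟨h, hv⟩
    · exact ⟨0, d.first⟩
    · exact ⟨Fin.last d.r, d.last⟩
    · by_contra hno
      exact d.noncut ⟨c, h⟩ (fun j hj => hno ⟨j, hj⟩) hv

lemma card_cutPoints (d : Decomp n a b k v) : (cutPoints v).card = d.r + 1 := by
  rw [← d.image_c, Finset.card_image_of_injective _ d.mono.injective, Finset.card_univ,
    Fintype.card_fin]

lemma c_eq_orderEmbOfFin (d : Decomp n a b k v) :
    d.c = (cutPoints v).orderEmbOfFin d.card_cutPoints :=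
  Finset.orderEmbOfFin_unique _ (fun j => d.image_c ▸ Finset.mem_image_of_mem _ (Finset.mem_univ j))
    d.mono

instance : Subsingleton (Decomp n a b k v) where
  allEq d d' := by
    obtain ⟨r, c, mono, first, last, cut, noncut⟩ := d
    obtain ⟨r', c', mono', first', last', cut', noncut'⟩ := d'
    have hc := c_eq_orderEmbOfFin ⟨r, c, mono, first, last, cut, noncut⟩
    have hc' := c_eq_orderEmbOfFin ⟨r', c', mono', first', last', cut', noncut'⟩
    obtain rfl : r = r' := Nat.succ_injective <|
      (card_cutPoints ⟨r, c, mono, first, last, cut, noncut⟩).symm.trans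
        (card_cutPoints ⟨r', c', mono', first', last', cut', noncut'⟩)
    obtain rfl : c = c' := hc.trans hc'.symm
    rfl

variable (v) in
noncomputable def ofCutPoints : Decomp n a b k v :=
  have hcard : (cutPoints v).card = (cutPoints v).card - 1 + 1 :=
    (Nat.sub_add_cancel (Finset.card_pos.2 ⟨a, left_mem_cutPoints⟩)).symm
  have hmem (j) : (cutPoints v).orderEmbOfFin hcard j ∈ cutPoints v :=
    Finset.orderEmbOfFin_mem _ hcard j
  { r := (cutPoints v).card - 1
    c := (cutPoints v).orderEmbOfFin hcard
    mono := ((cutPoints v).orderEmbOfFin hcard).strictMono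
    first := by
      rw [Fin.zero_eta.symm, Finset.orderEmbOfFin_zero hcard (Nat.succ_pos _)]
      exact le_antisymm (Finset.min'_le _ _ left_mem_cutPoints)
        (Finset.le_min' _ _ _ fun _ hc => (mem_Icc_of_mem_cutPoints hc).1)
    last := by
      rw [show Fin.last ((cutPoints v).card - 1) =
          ⟨(cutPoints v).card - 1 + 1 - 1, by omega⟩ from rfl,
        Finset.orderEmbOfFin_last hcard (Nat.succ_pos _)]
      exact le_antisymm (Finset.max'_le _ _ _ fun _ hc => (mem_Icc_of_mem_cutPoints hc).2)
        (Finset.le_max' _ _ right_mem_cutPoints)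
    cut := fun j _ _ h => by
      rcases mem_cutPoints.1 (hmem j) with he | he | ⟨_, hv⟩
      · exact (h.1.ne' he).elim
      · exact (h.2.ne he).elim
      · exact hv
    noncut := fun x hx hv => by
      have hx' : x.1 ∈ Set.range ((cutPoints v).orderEmbOfFin hcard) := by
        rw [Finset.range_orderEmbOfFin]
        exact mem_cutPoints.2 (Or.inr (Or.inr ⟨x.2, hv⟩))
      obtain ⟨j, hj⟩ := hx'
      exact hx j hj }

end Decomp

end Decompositions

lemma SFunctor.congr_map {C D : SCat} {F G : SFunctor C D} (h : F = G) {x y : C.Obj}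
    (k : SimplexCategoryᵒᵖ) (f : (C.Hom x y).obj k) :
    HEq (F.map (x := x) (y := y) k f) (G.map (x := x) (y := y) k f) := by
  subst h; rfl

lemma SCat.comp_congr_heq {C : SCat} {x x' y y' z z' : C.Obj} (hx : x = x') (hy : y = y')
    (hz : z = z') (k : SimplexCategoryᵒᵖ) {f : (C.Hom x y).obj k} {f' : (C.Hom x' y').obj k}
    {g : (C.Hom y z).obj k} {g' : (C.Hom y' z').obj k} (hf : HEq f f') (hg : HEq g g') :
    HEq (C.comp k f g) (C.comp k f' g') := by
  subst hx hy hz hf hg; rfl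

lemma emptySCat.hom_ext {C : SCat} (F G : emptySCat ⟶ C) : F = G :=
  SFunctor.ext' (funext fun x => x.elim) fun x => x.elim

lemma SCat.cofibrant_of_exists_lift (C : SCat)
    (h : ∀ {X Y : SCat} (p : X ⟶ Y), rlpOf genCof p → ∀ G : C ⟶ Y, ∃ F : C ⟶ X, F ≫ p = G) :
    C.Cofibrant := fun p hp =>
  ⟨fun {_ g} _ => ⟨by obtain ⟨F, hF⟩ := h p hp g; exact ⟨⟨F, emptySCat.hom_ext _ _, hF⟩⟩⟩⟩

def SFunctor.const (C : SCat) (y : C.Obj) : ptSCat ⟶ C where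
  obj _ := y
  map k _ := C.id y k
  map_id _ _ := rfl
  map_comp k _ _ := (C.id_comp k _).symm
  map_natural φ _ := (C.id_map y φ).symm

lemma exists_obj_eq_of_rlp {X Y : SCat} {p : X ⟶ Y} (hp : rlpOf genCof p) (y : Y.Obj) :
    ∃ x : X.Obj, p.obj x = y := by
  have sq : CommSq (emptyTo X) emptyToPt p (SFunctor.const Y y) := ⟨emptySCat.hom_ext _ _⟩
  obtain ⟨⟨l, -, hl⟩⟩ := ((hp emptyToPt (Or.inl ⟨Iso.refl _⟩)).sq_hasLift sq).exists_lift
  exact ⟨l.obj PUnit.unit, congrFun (congrArg SFunctor.obj hl) PUnit.unit⟩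

def K01.desc {C : SCat} {x y : C.Obj} {K : SSet.{0}} (u : K ⟶ C.Hom x y) : K01 K ⟶ C where
  obj s := match s with
    | false => x
    | true => y
  map {s t} k f :=
    match s, t, f with
    | false, false, _ => C.id x k
    | false, true, f => u.app k f
    | true, true, _ => C.id y k
    | true, false, f => Empty.elim f
  map_id s k := by cases s <;> rfl
  map_comp {s t r} k f g := by
    cases s <;> cases t <;> cases r <;>
      first
        | exact (C.id_comp _ _).symm
        | exact (C.comp_id _ _).symm
        | exact Empty.elim f
        | exact Empty.elim g
  map_natural {s t} {k l} φ f := by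
    cases s <;> cases t
    · exact (C.id_map x φ).symm
    · exact NatTrans.naturality_apply u φ (show K.obj k from f)
    · exact Empty.elim f
    · exact (C.id_map y φ).symm

lemma exists_hom_lift_of_rlp {X Y : SCat} {p : X ⟶ Y} (hp : rlpOf genCof p)
    {K L : SSet.{0}} (i : K ⟶ L) [Mono i] {x y : X.Obj} {x' y' : Y.Obj}
    (hx : p.obj x = x') (hy : p.obj y = y') (u : K ⟶ X.Hom x y) (w : L ⟶ Y.Hom x' y')
    (hw : ∀ k (f : K.obj k), HEq (p.map k (u.app k f)) (w.app k (i.app k f))) :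
    ∃ l : L ⟶ X.Hom x y, (∀ k (f : K.obj k), l.app k (i.app k f) = u.app k f) ∧
      ∀ k (g : L.obj k), HEq (p.map k (l.app k g)) (w.app k g) := by
  subst hx hy
  have sq : CommSq (K01.desc u) (K01map i) p (K01.desc w) := by
    refine ⟨SFunctor.ext' (funext fun s => by cases s <;> rfl) fun s t k f => ?_⟩
    cases s <;> cases t
    · exact heq_of_eq (p.map_id x k)
    · exact hw k f
    · exact Empty.elim f
    · exact heq_of_eq (p.map_id y k)
  obtain ⟨⟨l, hl, hr⟩⟩ :=
    ((hp (K01map i) (Or.inr ⟨K, L, i, ‹_›, ⟨Iso.refl _⟩⟩)).sq_hasLift sq).exists_lift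
  obtain rfl : l.obj false = x := congrFun (congrArg SFunctor.obj hl) false
  obtain rfl : l.obj true = y := congrFun (congrArg SFunctor.obj hl) true
  exact ⟨l.homNat false true,
    fun k f => eq_of_heq (SFunctor.congr_map hl (x := false) (y := true) k f),
    fun k g => SFunctor.congr_map hr (x := false) (y := true) k g⟩

section DeltaNHoms

variable {n : ℕ}

lemma comp_cst0 {k l : SimplexCategoryᵒᵖ} (φ : k ⟶ l) : φ.unop ≫ cst0 k = cst0 l := rfl

lemma DCat.hom_self_eq_id (a : Fin (n + 1)) {k : SimplexCategoryᵒᵖ} (v : (DHom n a a).obj k) :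
    v = (DCat n).id a k :=
  Prod.ext (Subsingleton.elim _ _) (funext fun x => absurd (x.2.1.trans x.2.2) (lt_irrefl a))

namespace DHom

variable {a b c : Fin (n + 1)} {k : SimplexCategoryᵒᵖ}

def restrictLeft (m : Fin (n + 1)) (ham : a ≤ m) (hmb : m ≤ b) (v : (DHom n a b).obj k) :
    (DHom n a m).obj k :=
  ⟨⟨ham⟩, fun x => v.2 ⟨x.1, x.2.1, x.2.2.trans_le hmb⟩⟩

def restrictRight (m : Fin (n + 1)) (ham : a ≤ m) (hmb : m ≤ b) (v : (DHom n a b).obj k) :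
    (DHom n m b).obj k :=
  ⟨⟨hmb⟩, fun x => v.2 ⟨x.1, ham.trans_lt x.2.1, x.2.2⟩⟩

lemma comp_restrictLeft_restrictRight {m : Fin (n + 1)} (ham : a < m) (hmb : m < b)
    (v : (DHom n a b).obj k) (hv : v.2 ⟨m, ham, hmb⟩ = cst0 k) :
    (DCat n).comp k (restrictLeft m ham.le hmb.le v) (restrictRight m ham.le hmb.le v) = v := by
  refine Prod.ext (Subsingleton.elim _ _) (funext fun x => ?_)
  rcases lt_trichotomy x.1 m with h | h | h
  · exact DCompFun_lt k _ _ x h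
  · rw [show x = ⟨m, ham, hmb⟩ from Subtype.ext h, hv]
    exact DCompFun_mid k _ _ _ rfl
  · exact DCompFun_gt k _ _ x h

lemma restrictLeft_comp (hab : a ≤ b) (hbc : b ≤ c) (v : (DHom n a b).obj k)
    (w : (DHom n b c).obj k) : restrictLeft b hab hbc ((DCat n).comp k v w) = v :=
  Prod.ext (Subsingleton.elim _ _) (funext fun x => DCompFun_lt k v.2 w.2 _ x.2.2)

lemma restrictRight_comp (hab : a ≤ b) (hbc : b ≤ c) (v : (DHom n a b).obj k)
    (w : (DHom n b c).obj k) : restrictRight b hab hbc ((DCat n).comp k v w) = w :=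
  Prod.ext (Subsingleton.elim _ _) (funext fun x => DCompFun_gt k v.2 w.2 _ x.2.1)

variable (n a b) in
/-- The decomposable arrows `a → b`: those with a coordinate equal to `0`, i.e. those factoring
through an intermediate object. -/
def boundary : SSet.{0} where
  obj k := {v : (DHom n a b).obj k // ∃ x, v.2 x = cst0 k}
  map φ := TypeCat.ofHom fun v =>
    ⟨(DHom n a b).map φ v.1, v.2.imp fun x hx =>
      show φ.unop ≫ v.1.2 x = _ from (congrArg (φ.unop ≫ ·) hx).trans (comp_cst0 φ)⟩
  map_id k := ConcreteCategory.hom_ext _ _ fun v =>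
    Subtype.ext (ConcreteCategory.congr_hom ((DHom n a b).map_id k) v.1)
  map_comp φ ψ := ConcreteCategory.hom_ext _ _ fun v =>
    Subtype.ext (ConcreteCategory.congr_hom ((DHom n a b).map_comp φ ψ) v.1)

variable (n a b) in
def boundaryι : boundary n a b ⟶ DHom n a b where
  app k := TypeCat.ofHom Subtype.val

instance : Mono (boundaryι n a b) :=
  have (k : SimplexCategoryᵒᵖ) : Mono ((boundaryι n a b).app k) :=
    (mono_iff_injective _).2 fun _ _ => Subtype.ext
  NatTrans.mono_of_mono_app _

end DHom

end DeltaNHoms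

section PartialLift

variable {n : ℕ} {X Y : SCat} {p : X ⟶ Y} {G : DCat n ⟶ Y} {F₀ : Fin (n + 1) → X.Obj}

/-- A lift of `G` along `p` with object map `F₀`, defined on the arrows `a → b` of length
`b - a ≤ d`. -/
structure PartialLift (p : X ⟶ Y) (G : DCat n ⟶ Y) (F₀ : Fin (n + 1) → X.Obj) (d : ℕ) :
    Type where
  map : ∀ {a b : Fin (n + 1)}, b.1 ≤ a.1 + d → ∀ {k : SimplexCategoryᵒᵖ},
    (DHom n a b).obj k → (X.Hom (F₀ a) (F₀ b)).obj k
  map_natural : ∀ {a b : Fin (n + 1)} (h : b.1 ≤ a.1 + d) {k l : SimplexCategoryᵒᵖ}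
    (φ : k ⟶ l) (v : (DHom n a b).obj k),
    map h ((DHom n a b).map φ v) = (X.Hom (F₀ a) (F₀ b)).map φ (map h v)
  map_id : ∀ (a : Fin (n + 1)) (k : SimplexCategoryᵒᵖ) (v : (DHom n a a).obj k),
    map (Nat.le_add_right a.1 d) v = X.id (F₀ a) k
  map_comp : ∀ {a b c : Fin (n + 1)} (hac : c.1 ≤ a.1 + d) (hab : b.1 ≤ a.1 + d)
    (hbc : c.1 ≤ b.1 + d) {k : SimplexCategoryᵒᵖ} (v : (DHom n a b).obj k)
    (w : (DHom n b c).obj k),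
    map hac ((DCat n).comp k v w) = X.comp k (map hab v) (map hbc w)
  fac : ∀ {a b : Fin (n + 1)} (h : b.1 ≤ a.1 + d) {k : SimplexCategoryᵒᵖ}
    (v : (DHom n a b).obj k), HEq (p.map k (map h v)) (G.map (x := a) (y := b) k v)

namespace PartialLift

noncomputable def base (hF₀ : ∀ a, p.obj (F₀ a) = G.obj a) : PartialLift p G F₀ 0 where
  map {a b} h k v :=
    cast (congrArg (fun t => (X.Hom (F₀ a) (F₀ t)).obj k) (by have := v.1.down; omega))
      (X.id (F₀ a) k)
  map_natural {a b} h k l φ v := by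
    obtain rfl : a = b := by have := v.1.down; omega
    simp only [cast_eq, X.id_map]
  map_id a k v := cast_eq _ _
  map_comp {a b c} hac hab hbc k v w := by
    obtain rfl : a = b := by have := v.1.down; omega
    obtain rfl : a = c := by have := w.1.down; omega
    simp only [cast_eq, X.id_comp]
  fac {a b} h k v := by
    obtain rfl : a = b := by have := v.1.down; omega
    rw [cast_eq, p.map_id, DCat.hom_self_eq_id a v]
    refine HEq.trans ?_ (heq_of_eq (G.map_id a k).symm)
    rw [hF₀ a]

variable {d : ℕ} (S : PartialLift p G F₀ d)

def compAt {a b : Fin (n + 1)} (hab : b.1 ≤ a.1 + (d + 1)) (m : Fin (n + 1)) (ham : a < m)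
    (hmb : m < b) {k : SimplexCategoryᵒᵖ} (v : (DHom n a b).obj k) :
    (X.Hom (F₀ a) (F₀ b)).obj k :=
  X.comp k (S.map (by omega) (DHom.restrictLeft m ham.le hmb.le v))
    (S.map (by omega) (DHom.restrictRight m ham.le hmb.le v))

section CutPoint

variable {a b : Fin (n + 1)} (hab : b.1 ≤ a.1 + (d + 1)) {k : SimplexCategoryᵒᵖ}
  {v : (DHom n a b).obj k}

lemma compAt_eq_of_lt {m m' : Fin (n + 1)} (ham : a < m) (hmb : m < b) (ham' : a < m')
    (hmb' : m' < b) (hmm' : m < m') (hm : v.2 ⟨m, ham, hmb⟩ = cst0 k)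
    (hm' : v.2 ⟨m', ham', hmb'⟩ = cst0 k) :
    S.compAt hab m ham hmb v = S.compAt hab m' ham' hmb' v := by
  have hleft := DHom.comp_restrictLeft_restrictRight ham hmm'
    (DHom.restrictLeft m' ham'.le hmb'.le v) hm
  have hright := DHom.comp_restrictLeft_restrictRight hmm' hmb'
    (DHom.restrictRight m ham.le hmb.le v) hm'
  rw [compAt, compAt, ← hleft, ← hright, S.map_comp (by omega) (by omega) (by omega),
    S.map_comp (by omega) (by omega) (by omega), X.assoc]
  rfl

lemma compAt_eq {m m' : Fin (n + 1)} (ham : a < m) (hmb : m < b) (ham' : a < m')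
    (hmb' : m' < b) (hm : v.2 ⟨m, ham, hmb⟩ = cst0 k) (hm' : v.2 ⟨m', ham', hmb'⟩ = cst0 k) :
    S.compAt hab m ham hmb v = S.compAt hab m' ham' hmb' v := by
  rcases lt_trichotomy m m' with h | rfl | h
  · exact S.compAt_eq_of_lt hab ham hmb ham' hmb' h hm hm'
  · rfl
  · exact (S.compAt_eq_of_lt hab ham' hmb' ham hmb h hm' hm).symm

lemma compAt_map (m : Fin (n + 1)) (ham : a < m) (hmb : m < b) {l : SimplexCategoryᵒᵖ}
    (φ : k ⟶ l) :
    S.compAt hab m ham hmb ((DHom n a b).map φ v) =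
      (X.Hom (F₀ a) (F₀ b)).map φ (S.compAt hab m ham hmb v) := by
  rw [compAt, compAt, X.comp_map, ← S.map_natural, ← S.map_natural]
  rfl

lemma compAt_fac (hF₀ : ∀ a, p.obj (F₀ a) = G.obj a) {m : Fin (n + 1)} (ham : a < m)
    (hmb : m < b) (hm : v.2 ⟨m, ham, hmb⟩ = cst0 k) :
    HEq (p.map k (S.compAt hab m ham hmb v)) (G.map (x := a) (y := b) k v) := by
  have hv := congrArg (G.map (x := a) (y := b) k)
    (DHom.comp_restrictLeft_restrictRight ham hmb v hm)
  refine HEq.trans ?_ (heq_of_eq ((G.map_comp k _ _).symm.trans hv))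
  rw [compAt, p.map_comp]
  exact SCat.comp_congr_heq (hF₀ a) (hF₀ m) (hF₀ b) k (S.fac _ _) (S.fac _ _)

end CutPoint

section Boundary

variable {a b : Fin (n + 1)} (hab : b.1 ≤ a.1 + (d + 1))

lemma compAt_choose {k : SimplexCategoryᵒᵖ} {v : (DHom n a b).obj k}
    (hv : ∃ x, v.2 x = cst0 k) {m : Fin (n + 1)} (ham : a < m) (hmb : m < b)
    (hm : v.2 ⟨m, ham, hmb⟩ = cst0 k) :
    S.compAt hab _ (Classical.choose hv).2.1 (Classical.choose hv).2.2 v =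
      S.compAt hab m ham hmb v :=
  S.compAt_eq hab _ _ ham hmb (Classical.choose_spec hv) hm

noncomputable def boundaryMap : DHom.boundary n a b ⟶ X.Hom (F₀ a) (F₀ b) where
  app k := TypeCat.ofHom fun v =>
    S.compAt hab _ (Classical.choose v.2).2.1 (Classical.choose v.2).2.2 v.1
  naturality k l φ := by
    ext v
    have hm : ((DHom n a b).map φ v.1).2 (Classical.choose v.2) = cst0 l :=
      (congrArg (φ.unop ≫ ·) (Classical.choose_spec v.2)).trans (comp_cst0 φ)
    have hx := (Classical.choose v.2).2
    exact (S.compAt_choose hab _ hx.1 hx.2 hm).trans (S.compAt_map hab _ hx.1 hx.2 φ)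

lemma boundaryMap_app {k : SimplexCategoryᵒᵖ} (v : (DHom.boundary n a b).obj k)
    {m : Fin (n + 1)} (ham : a < m) (hmb : m < b) (hm : v.1.2 ⟨m, ham, hmb⟩ = cst0 k) :
    (S.boundaryMap hab).app k v = S.compAt hab m ham hmb v.1 :=
  S.compAt_choose hab v.2 ham hmb hm

lemma exists_extension (hp : rlpOf genCof p) (hF₀ : ∀ a, p.obj (F₀ a) = G.obj a) :
    ∃ ℓ : DHom n a b ⟶ X.Hom (F₀ a) (F₀ b),
      (∀ {k : SimplexCategoryᵒᵖ} (v : (DHom n a b).obj k) (m : Fin (n + 1)) (ham : a < m)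
        (hmb : m < b), v.2 ⟨m, ham, hmb⟩ = cst0 k → ℓ.app k v = S.compAt hab m ham hmb v) ∧
      ∀ {k : SimplexCategoryᵒᵖ} (v : (DHom n a b).obj k),
        HEq (p.map k (ℓ.app k v)) (G.map (x := a) (y := b) k v) := by
  obtain ⟨ℓ, hℓ, hfac⟩ := exists_hom_lift_of_rlp hp (DHom.boundaryι n a b) (hF₀ a) (hF₀ b)
    (S.boundaryMap hab) (G.homNat a b) fun k v => by
      obtain ⟨⟨m, ham, hmb⟩, hm⟩ := v.2
      rw [S.boundaryMap_app hab v ham hmb hm]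
      exact S.compAt_fac hab hF₀ ham hmb hm
  exact ⟨ℓ, fun v m ham hmb hm => (hℓ _ ⟨v, _, hm⟩).trans (S.boundaryMap_app hab _ ham hmb hm),
    fun v => hfac _ v⟩

end Boundary

noncomputable def extend
    (ℓ : ∀ a b : Fin (n + 1), b.1 = a.1 + (d + 1) → (DHom n a b ⟶ X.Hom (F₀ a) (F₀ b)))
    (hℓ : ∀ a b (hab : b.1 = a.1 + (d + 1)) {k : SimplexCategoryᵒᵖ} (v : (DHom n a b).obj k)
      (m : Fin (n + 1)) (ham : a < m) (hmb : m < b),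
      v.2 ⟨m, ham, hmb⟩ = cst0 k → (ℓ a b hab).app k v = S.compAt hab.le m ham hmb v)
    (hfac : ∀ a b (hab : b.1 = a.1 + (d + 1)) {k : SimplexCategoryᵒᵖ} (v : (DHom n a b).obj k),
      HEq (p.map k ((ℓ a b hab).app k v)) (G.map (x := a) (y := b) k v)) :
    PartialLift p G F₀ (d + 1) where
  map {a b} h k v := if h' : b.1 ≤ a.1 + d then S.map h' v else (ℓ a b (by omega)).app k v
  map_natural {a b} h k l φ v := by
    by_cases h' : b.1 ≤ a.1 + d
    · simp only [dif_pos h']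
      exact S.map_natural h' φ v
    · simp only [dif_neg h']
      exact NatTrans.naturality_apply (ℓ a b _) φ v
  map_id a k v := by
    simp only [dif_pos (Nat.le_add_right a.1 d)]
    exact S.map_id a k v
  map_comp {a b c} hac hab hbc k v w := by
    have hle_ab := v.1.down
    have hle_bc := w.1.down
    by_cases hac' : c.1 ≤ a.1 + d
    · simp only [dif_pos hac', dif_pos (show b.1 ≤ a.1 + d by omega),
        dif_pos (show c.1 ≤ b.1 + d by omega)]
      exact S.map_comp _ _ _ v w
    obtain rfl | hab' := eq_or_lt_of_le hle_ab
    · obtain rfl := DCat.hom_self_eq_id a v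
      rw [show (DCat n).comp k ((DCat n).id a k) w = w from (DCat n).id_comp k w,
        dif_pos (Nat.le_add_right a.1 d)]
      exact (X.id_comp k _).symm.trans (congrArg (X.comp k · _) (S.map_id a k _).symm)
    obtain rfl | hbc' := eq_or_lt_of_le hle_bc
    · obtain rfl := DCat.hom_self_eq_id b w
      rw [show (DCat n).comp k v ((DCat n).id b k) = v from (DCat n).comp_id k v,
        dif_pos (Nat.le_add_right b.1 d)]
      exact (X.comp_id k _).symm.trans (congrArg (X.comp k _ ·) (S.map_id b k _).symm)
    simp only [dif_neg hac', dif_pos (show b.1 ≤ a.1 + d by omega),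
      dif_pos (show c.1 ≤ b.1 + d by omega)]
    refine (hℓ a c _ _ b hab' hbc' (DCompFun_mid k v.2 w.2 ⟨b, hab', hbc'⟩ rfl)).trans ?_
    unfold compAt
    rw [DHom.restrictLeft_comp, DHom.restrictRight_comp]
  fac {a b} h k v := by
    by_cases h' : b.1 ≤ a.1 + d
    · simp only [dif_pos h']
      exact S.fac h' v
    · simp only [dif_neg h']
      exact hfac _ _ _ v

lemma nonempty (hp : rlpOf genCof p) (hF₀ : ∀ a, p.obj (F₀ a) = G.obj a) (d : ℕ) :
    Nonempty (PartialLift p G F₀ d) := by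
  induction d with
  | zero => exact ⟨base hF₀⟩
  | succ d ih =>
    obtain ⟨S⟩ := ih
    choose ℓ hℓ hfac using fun (a b : Fin (n + 1)) (hab : b.1 = a.1 + (d + 1)) =>
      S.exists_extension hab.le hp hF₀
    exact ⟨S.extend ℓ hℓ hfac⟩

def toSFunctor (S : PartialLift p G F₀ n) : DCat n ⟶ X where
  obj := F₀
  map {a b} k v := S.map (by omega) v
  map_id a k := S.map_id a k _
  map_comp {a b c} k v w := S.map_comp (by omega) (by omega) (by omega) v w
  map_natural {a b} k l φ v := S.map_natural (by omega) φ v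

lemma toSFunctor_comp (S : PartialLift p G F₀ n) (hF₀ : ∀ a, p.obj (F₀ a) = G.obj a) :
    S.toSFunctor ≫ p = G :=
  SFunctor.ext' (funext hF₀) fun _ _ _ v => S.fac _ v

end PartialLift

end PartialLift

lemma DCat.exists_lift_of_rlp {n : ℕ} {X Y : SCat} {p : X ⟶ Y} (hp : rlpOf genCof p)
    (G : DCat n ⟶ Y) : ∃ F : DCat n ⟶ X, F ≫ p = G := by
  choose F₀ hF₀ using fun a => exists_obj_eq_of_rlp hp (G.obj a)
  obtain ⟨S⟩ := PartialLift.nonempty hp hF₀ n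
  exact ⟨S.toSFunctor, S.toSFunctor_comp hF₀⟩

/-- `Δ_𝔑ⁿ` is cofibrant: the map from the empty simplicial category is a
cofibration, its morphisms being freely generated by the set `Indⁿ` of indecomposable
nondegenerate arrows — every arrow admits a unique decomposition into indecomposable
factors. -/
theorem DCat_cofibrant_freely_generated (n : ℕ) :
    (DCat n).Cofibrant ∧
      ∀ (a b : Fin (n + 1)) (k : SimplexCategoryᵒᵖ) (v : (DHom n a b).obj k),
        Nonempty (Decomp n a b k v) ∧ Subsingleton (Decomp n a b k v) :=
  ⟨SCat.cofibrant_of_exists_lift _ fun _ hp G => DCat.exists_lift_of_rlp hp G,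
    fun _ _ _ v => ⟨⟨Decomp.ofCutPoints v⟩, inferInstance⟩⟩
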